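/- arXiv:1505.03714 — 3 statements merged into one kernel-verified Lean document; each statement's English description precedes it below -/
import Mathlib

section
/- Let p ∈ (2,6). There exists a constant C_p > 0 depending only on p such that for every star graph G with at least one half-line (m ≥ 1) and every u ∈ H¹(G), one has ‖u‖_{L^p(G)}^p ≤ C_p ‖u‖_{L²(G)}^{p/2+1} ‖u′‖_{L²(G)}^{p/2−1}. -/
open MeasureTheory Filter Set

noncomputable section

/-- `H1R p f f'` : `f : ℝ → ℝ` is an `H¹` function on `ℝ`, with weak derivative `f'`
(encoded via the absolutely continuous representative and the fundamental theorem
of calculus), and moreover `|f|^p` is integrable (so that the NLS energy is finite). -/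
def H1R (p : ℝ) (f f' : ℝ → ℝ) : Prop :=
  Continuous f ∧
  (∀ x y : ℝ, IntervalIntegrable f' volume x y) ∧
  (∀ x y : ℝ, f y = f x + ∫ t in x..y, f' t) ∧
  Integrable (fun x => (f x) ^ 2) ∧
  Integrable (fun x => |f x| ^ p) ∧
  Integrable (fun x => (f' x) ^ 2)

/-- The NLS energy `E(f, ℝ) = ½∫|f'|² − (1/p)∫|f|^p` on the line. -/
def energyR (p : ℝ) (f f' : ℝ → ℝ) : ℝ :=
  (1 / 2) * (∫ x, (f' x) ^ 2) - (1 / p) * ∫ x, |f x| ^ p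

/-- The ground-state energy level `E_ℝ(μ)` on the line. -/
def levelR (p μ : ℝ) : ℝ :=
  sInf { e | ∃ f f' : ℝ → ℝ, H1R p f f' ∧ (∫ x, (f x) ^ 2) = μ ∧ e = energyR p f f' }

/-- `H1HalfLine p f f'` : `f` is an `H¹` function on the half-line `[0, ∞)`,
with weak derivative `f'`. -/
def H1HalfLine (p : ℝ) (f f' : ℝ → ℝ) : Prop :=
  ContinuousOn f (Ici 0) ∧
  (∀ x y : ℝ, 0 ≤ x → 0 ≤ y → IntervalIntegrable f' volume x y) ∧
  (∀ x y : ℝ, 0 ≤ x → 0 ≤ y → f y = f x + ∫ t in x..y, f' t) ∧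
  IntegrableOn (fun x => (f x) ^ 2) (Ioi 0) ∧
  IntegrableOn (fun x => |f x| ^ p) (Ioi 0) ∧
  IntegrableOn (fun x => (f' x) ^ 2) (Ioi 0)

/-- The NLS energy on the half-line. -/
def energyHL (p : ℝ) (f f' : ℝ → ℝ) : ℝ :=
  (1 / 2) * (∫ x in Ioi (0:ℝ), (f' x) ^ 2) - (1 / p) * ∫ x in Ioi (0:ℝ), |f x| ^ p

/-- The ground-state energy level `E_{ℝ⁺}(μ)` on the half-line. -/
def levelHL (p μ : ℝ) : ℝ :=
  sInf { e | ∃ f f' : ℝ → ℝ, H1HalfLine p f f' ∧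
    (∫ x in Ioi (0:ℝ), (f x) ^ 2) = μ ∧ e = energyHL p f f' }

/-- `H1Edge p ℓ g g'` : `g` is an `H¹` function on the finite edge `[0, ℓ]`,
with weak derivative `g'`. -/
def H1Edge (p ℓ : ℝ) (g g' : ℝ → ℝ) : Prop :=
  ContinuousOn g (Icc 0 ℓ) ∧
  (∀ x ∈ Icc 0 ℓ, ∀ y ∈ Icc 0 ℓ, IntervalIntegrable g' volume x y) ∧
  (∀ x ∈ Icc 0 ℓ, ∀ y ∈ Icc 0 ℓ, g y = g x + ∫ t in x..y, g' t) ∧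
  IntegrableOn (fun x => (g x) ^ 2) (Ioo 0 ℓ) ∧
  IntegrableOn (fun x => |g x| ^ p) (Ioo 0 ℓ) ∧
  IntegrableOn (fun x => (g' x) ^ 2) (Ioo 0 ℓ)

/-- A star graph: `m` half-lines and `k` finite edges of lengths `ℓ j > 0`,
all emanating from a single vertex (sitting at coordinate `0` of every edge). -/
structure StarGraph where
  m : ℕ
  k : ℕ
  ℓ : Fin k → ℝ
  ℓ_pos : ∀ j, 0 < ℓ j

/-- A function on a star graph `G`, given by its components on the half-lines
(`f i`, for `i : Fin G.m`) and on the finite edges (`g j`, for `j : Fin G.k`),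
together with chosen (weak) derivatives `f' i`, `g' j`. -/
structure GraphFun (G : StarGraph) where
  f : Fin G.m → ℝ → ℝ
  f' : Fin G.m → ℝ → ℝ
  g : Fin G.k → ℝ → ℝ
  g' : Fin G.k → ℝ → ℝ

/-- Membership in `H¹(G)`: every component is `H¹` on its edge, and all components
agree at the common vertex. -/
def InH1G (p : ℝ) (G : StarGraph) (u : GraphFun G) : Prop :=
  (∀ i, H1HalfLine p (u.f i) (u.f' i)) ∧
  (∀ j, H1Edge p (G.ℓ j) (u.g j) (u.g' j)) ∧
  (∀ i i', u.f i 0 = u.f i' 0) ∧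
  (∀ i j, u.f i 0 = u.g j 0) ∧
  (∀ j j', u.g j 0 = u.g j' 0)

/-- `‖u‖²_{L²(G)}`, the (squared) mass of `u`. -/
def massG (G : StarGraph) (u : GraphFun G) : ℝ :=
  (∑ i, ∫ x in Ioi (0:ℝ), (u.f i x) ^ 2) + ∑ j, ∫ x in Ioo 0 (G.ℓ j), (u.g j x) ^ 2

/-- `‖u‖^p_{L^p(G)}`. -/
def lpG (p : ℝ) (G : StarGraph) (u : GraphFun G) : ℝ :=
  (∑ i, ∫ x in Ioi (0:ℝ), |u.f i x| ^ p) + ∑ j, ∫ x in Ioo 0 (G.ℓ j), |u.g j x| ^ p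

/-- `‖u'‖²_{L²(G)}`, the (squared) `L²` norm of the derivative. -/
def kinG (G : StarGraph) (u : GraphFun G) : ℝ :=
  (∑ i, ∫ x in Ioi (0:ℝ), (u.f' i x) ^ 2) + ∑ j, ∫ x in Ioo 0 (G.ℓ j), (u.g' j x) ^ 2

/-- The NLS energy `E(u, G) = ½‖u'‖²_{L²(G)} − (1/p)‖u‖^p_{L^p(G)}`. -/
def energyG (p : ℝ) (G : StarGraph) (u : GraphFun G) : ℝ :=
  (1 / 2) * kinG G u - (1 / p) * lpG p G u

/-- `‖u‖_{L^∞(G)}`: the supremum of `|u|` over the whole graph. -/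
def supNormG (G : StarGraph) (u : GraphFun G) : ℝ :=
  sSup ({ y | ∃ i : Fin G.m, ∃ x ≥ (0:ℝ), y = |u.f i x| } ∪
        { y | ∃ j : Fin G.k, ∃ x ∈ Icc 0 (G.ℓ j), y = |u.g j x| })

/-- The ground-state energy level `E_G(μ) = inf {E(u,G) : u ∈ H¹_μ(G)}`. -/
def levelG (p : ℝ) (G : StarGraph) (μ : ℝ) : ℝ :=
  sInf { e | ∃ u : GraphFun G, InH1G p G u ∧ massG G u = μ ∧ e = energyG p G u }

/-- `u` is a ground state of mass `μ` on `G`: it minimizes `E(·, G)` over `H¹_μ(G)`. -/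
def IsGroundState (p : ℝ) (G : StarGraph) (μ : ℝ) (u : GraphFun G) : Prop :=
  InH1G p G u ∧ massG G u = μ ∧
  ∀ v : GraphFun G, InH1G p G v → massG G v = μ → energyG p G u ≤ energyG p G v

/-- Weak `L²(s)` convergence of a sequence of functions, tested against
square-integrable functions on `s`. -/
def WeakL2On (s : Set ℝ) (h : ℕ → ℝ → ℝ) (h₀ : ℝ → ℝ) : Prop :=
  ∀ φ : ℝ → ℝ, IntegrableOn (fun x => (φ x) ^ 2) s →
    Tendsto (fun n => ∫ x in s, h n x * φ x) atTop (nhds (∫ x in s, h₀ x * φ x))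

/-- Componentwise difference of two functions on a star graph. -/
def GraphFun.sub {G : StarGraph} (u v : GraphFun G) : GraphFun G :=
  ⟨fun i x => u.f i x - v.f i x, fun i x => u.f' i x - v.f' i x,
   fun j x => u.g j x - v.g j x, fun j x => u.g' j x - v.g' j x⟩

/-- The star graph obtained from `G` by attaching one additional finite edge of
length `ε` at the vertex. -/
def StarGraph.addEdge (G : StarGraph) (ε : ℝ) (hε : 0 < ε) : StarGraph where
  m := G.m
  k := G.k + 1
  ℓ := Fin.cons ε G.ℓ
  ℓ_pos := by
    intro j
    refine Fin.cases ?_ ?_ j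
    · simpa using hε
    · intro i; simpa using G.ℓ_pos i

/-!
Fix a length `L > 0`. Around every point of a half-line, and every point of a finite edge of
length at least `L`, there is an interval of length `L` inside that edge; on it `u²` is somewhere
at most `‖u‖₂² / L`, and by Cauchy–Schwarz `u` oscillates by at most `√L ‖u'‖₂`. Points of
shorter edges lie within distance `L` of the vertex, whose value is controlled through a half-line.
Hence `‖u‖_∞ ≤ ‖u‖₂ / √L + 2 √L ‖u'‖₂`, and `L = ‖u‖₂ / ‖u'‖₂` gives
`‖u‖_∞ ≤ 3 (‖u‖₂ ‖u'‖₂)^(1/2)`. Finally `‖u‖_p^p ≤ ‖u‖_∞^(p-2) ‖u‖₂²`.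
-/

open Topology

theorem integral_abs_le_sqrt_mul_sqrt {α : Type*} [MeasurableSpace α] {μ : Measure α}
    [IsFiniteMeasure μ] {h : α → ℝ} (hh : AEStronglyMeasurable h μ)
    (hh2 : Integrable (fun x => h x ^ 2) μ) :
    ∫ x, |h x| ∂μ ≤ √(μ.real univ) * √(∫ x, h x ^ 2 ∂μ) := by
  have hL2 : MemLp (fun x => |h x|) (ENNReal.ofReal 2) μ := by
    rw [ENNReal.ofReal_ofNat]
    exact ((memLp_two_iff_integrable_sq hh).2 hh2).abs
  have := integral_mul_le_Lp_mul_Lq_of_nonneg Real.HolderConjugate.two_two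
    (ae_of_all μ fun _ => zero_le_one) (ae_of_all μ fun x => abs_nonneg (h x))
    (by simpa using memLp_const (1 : ℝ)) hL2
  simpa [Real.sqrt_eq_rpow, Real.rpow_two] using this

theorem exists_abs_le_sqrt_div_sqrt {α : Type*} [MeasurableSpace α] {μ : Measure α}
    {s : Set α} (hs : μ s ≠ 0) (hs' : μ s ≠ ⊤) {f : α → ℝ}
    (hf : IntegrableOn (fun x => f x ^ 2) s μ) :
    ∃ y ∈ s, |f y| ≤ √(∫ x in s, f x ^ 2 ∂μ) / √(μ.real s) := by
  obtain ⟨y, hy, hle⟩ := exists_le_setAverage hs hs' hf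
  refine ⟨y, hy, ?_⟩
  rw [setAverage_eq, smul_eq_mul, inv_mul_eq_div] at hle
  rw [← Real.sqrt_div' _ measureReal_nonneg, ← Real.sqrt_sq_eq_abs]
  exact Real.sqrt_le_sqrt hle

theorem abs_le_abs_add_sqrt_mul_sqrt {f f' : ℝ → ℝ} {s : Set ℝ} {x y k L : ℝ}
    (hftc : f x = f y + ∫ t in y..x, f' t) (hf' : IntervalIntegrable f' volume y x)
    (hs : uIoc y x ≤ᵐ[volume] s) (hf'2 : IntegrableOn (fun t => f' t ^ 2) s)
    (hk : ∫ t in s, f' t ^ 2 ≤ k) (hxy : |x - y| ≤ L) :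
    |f x| ≤ |f y| + √k * √L := by
  have : IsFiniteMeasure (volume.restrict (uIoc y x)) := by
    rw [isFiniteMeasure_restrict, Real.volume_uIoc]; exact ENNReal.ofReal_ne_top
  have hcs := integral_abs_le_sqrt_mul_sqrt hf'.def'.aestronglyMeasurable
    (hf'2.mono_set_ae hs)
  have hvol : volume.real (uIoc y x) ≤ L := by
    rw [measureReal_def, Real.volume_uIoc, ENNReal.toReal_ofReal (abs_nonneg _)]; exact hxy
  have hkW : ∫ t in uIoc y x, f' t ^ 2 ≤ k :=
    (setIntegral_mono_set hf'2 (ae_of_all _ fun t => sq_nonneg (f' t)) hs).trans hk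
  calc |f x| ≤ |f y| + |∫ t in y..x, f' t| := hftc ▸ abs_add_le _ _
    _ ≤ |f y| + ∫ t in uIoc y x, |f' t| := by
      gcongr; simpa using intervalIntegral.norm_integral_le_integral_norm_uIoc (f := f')
    _ ≤ |f y| + √k * √L := by
      rw [mul_comm]
      gcongr
      refine hcs.trans ?_
      rw [measureReal_restrict_apply_univ]
      gcongr

theorem abs_le_sqrt_div_sqrt_add_of_window {f f' : ℝ → ℝ} {s : Set ℝ} {c L m k x : ℝ}
    (hL : 0 < L) (hW : Ioc c (c + L) ≤ᵐ[volume] s) (hx : x ∈ Icc c (c + L))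
    (hftc : ∀ y ∈ Icc c (c + L), f x = f y + ∫ t in y..x, f' t)
    (hf' : ∀ y ∈ Icc c (c + L), IntervalIntegrable f' volume y x)
    (hf2 : IntegrableOn (fun t => f t ^ 2) s) (hf'2 : IntegrableOn (fun t => f' t ^ 2) s)
    (hm : ∫ t in s, f t ^ 2 ≤ m) (hk : ∫ t in s, f' t ^ 2 ≤ k) :
    |f x| ≤ √m / √L + √k * √L := by
  obtain ⟨y, hy, hfy⟩ := exists_abs_le_sqrt_div_sqrt (μ := volume) (by simp [hL]) (by simp)
    (hf2.mono_set_ae hW)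
  rw [Real.volume_real_Ioc_of_le (by linarith), add_sub_cancel_left] at hfy
  have hmW : ∫ t in Ioc c (c + L), f t ^ 2 ≤ m :=
    (setIntegral_mono_set hf2 (ae_of_all _ fun t => sq_nonneg (f t)) hW).trans hm
  have hy' : y ∈ Icc c (c + L) := Ioc_subset_Icc_self hy
  have hyx : uIoc y x ⊆ Ioc c (c + L) := Ioc_subset_Ioc (le_min hy'.1 hx.1) (max_le hy'.2 hx.2)
  have hxy : |x - y| ≤ L := abs_sub_le_iff.2 ⟨by linarith [hx.2, hy'.1], by linarith [hx.1, hy'.2]⟩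
  calc |f x| ≤ |f y| + √k * √L := abs_le_abs_add_sqrt_mul_sqrt (hftc y hy') (hf' y hy')
        (hyx.eventuallyLE.trans hW) hf'2 hk hxy
    _ ≤ √m / √L + √k * √L := by
      gcongr
      exact hfy.trans (by gcongr)

theorem H1HalfLine.abs_le {p : ℝ} {f f' : ℝ → ℝ} (hf : H1HalfLine p f f') {m k L x : ℝ}
    (hL : 0 < L) (hm : ∫ t in Ioi 0, f t ^ 2 ≤ m) (hk : ∫ t in Ioi 0, f' t ^ 2 ≤ k)
    (hx : 0 ≤ x) :
    |f x| ≤ √m / √L + √k * √L := by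
  obtain ⟨-, hf', hftc, hf2, -, hf'2⟩ := hf
  exact abs_le_sqrt_div_sqrt_add_of_window hL
    (Ioc_subset_Ioi_self.trans (Ioi_subset_Ioi hx)).eventuallyLE ⟨le_rfl, by linarith⟩
    (fun y hy => hftc y x (hx.trans hy.1) hx) (fun y hy => hf' y x (hx.trans hy.1) hx)
    hf2 hf'2 hm hk

theorem H1Edge.abs_le {p ℓ : ℝ} {g g' : ℝ → ℝ} (hg : H1Edge p ℓ g g') {m k L x : ℝ}
    (hL : 0 < L) (hm : ∫ t in Ioo 0 ℓ, g t ^ 2 ≤ m) (hk : ∫ t in Ioo 0 ℓ, g' t ^ 2 ≤ k)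
    (h0 : |g 0| ≤ √m / √L + √k * √L) (hx : x ∈ Icc 0 ℓ) :
    |g x| ≤ √m / √L + 2 * (√k * √L) := by
  obtain ⟨-, hg', hftc, hg2, -, hg'2⟩ := hg
  have hkL : 0 ≤ √k * √L := by positivity
  rcases le_or_gt L ℓ with hLℓ | hℓL
  · set c := min x (ℓ - L)
    have hc : 0 ≤ c := le_min hx.1 (by linarith)
    have hcL : c + L ≤ ℓ := by linarith [min_le_right x (ℓ - L)]
    have hxc : x - L ≤ c := le_min (by linarith) (by linarith [hx.2])
    have hWℓ : Icc c (c + L) ⊆ Icc 0 ℓ := Icc_subset_Icc hc hcL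
    have := abs_le_sqrt_div_sqrt_add_of_window hL
      ((Ioc_subset_Ioc hc hcL).eventuallyLE.trans Ioo_ae_eq_Ioc.symm.le)
      ⟨min_le_left _ _, by linarith⟩
      (fun y hy => hftc y (hWℓ hy) x hx) (fun y hy => hg' y (hWℓ hy) x hx) hg2 hg'2 hm hk
    linarith
  · have h0ℓ : (0 : ℝ) ∈ Icc 0 ℓ := ⟨le_rfl, hx.1.trans hx.2⟩
    have h0x : uIoc 0 x ≤ᵐ[volume] Ioo 0 ℓ := by
      rw [uIoc_of_le hx.1]
      exact (Ioc_subset_Ioc_right hx.2).eventuallyLE.trans Ioo_ae_eq_Ioc.symm.le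
    have := abs_le_abs_add_sqrt_mul_sqrt (L := L) (hftc 0 h0ℓ x hx) (hg' 0 h0ℓ x hx) h0x hg'2 hk
      (by rw [sub_zero, abs_of_nonneg hx.1]; exact hx.2.trans hℓL.le)
    linarith

theorem le_three_mul_sqrt_mul_of_forall_le {a M K : ℝ} (hM : 0 ≤ M) (hK : 0 ≤ K)
    (h : ∀ L > 0, a ≤ M / √L + 2 * (K * √L)) :
    a ≤ 3 * √(M * K) := by
  have hbound : ∀ ε > 0, a ≤ 3 * (√(M + ε) * √(K + ε)) := by
    intro ε hε
    have hs : 0 < √(M + ε) := Real.sqrt_pos.2 (by linarith)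
    have ht : 0 < √(K + ε) := Real.sqrt_pos.2 (by linarith)
    have hs2 := Real.sq_sqrt (by linarith : 0 ≤ M + ε)
    have ht2 := Real.sq_sqrt (by linarith : 0 ≤ K + ε)
    -- the optimal window `L = M / K`, perturbed so that it is positive
    refine (h ((M + ε) / (K + ε)) (by positivity)).trans ?_
    rw [Real.sqrt_div' _ (by linarith), div_div_eq_mul_div, mul_div_assoc']
    have h1 : M * √(K + ε) / √(M + ε) ≤ √(M + ε) * √(K + ε) := by
      rw [div_le_iff₀ hs]; nlinarith
    have h2 : K * √(M + ε) / √(K + ε) ≤ √(M + ε) * √(K + ε) := by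
      rw [div_le_iff₀ ht]; nlinarith
    linarith
  have hlim : Tendsto (fun ε => 3 * (√(M + ε) * √(K + ε))) (𝓝[>] 0)
      (𝓝 (3 * √(M * K))) := by
    rw [Real.sqrt_mul hM]
    have : Continuous fun ε : ℝ => 3 * (√(M + ε) * √(K + ε)) := by fun_prop
    simpa using (this.tendsto 0).mono_left nhdsWithin_le_nhds
  exact ge_of_tendsto hlim (eventually_nhdsWithin_of_forall hbound)

theorem single_le_sum_add_sum {ι κ : Type*} [Fintype ι] [Fintype κ] {a : ι → ℝ} {b : κ → ℝ}
    (ha : ∀ i, 0 ≤ a i) (hb : ∀ j, 0 ≤ b j) :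
    (∀ i, a i ≤ ∑ i, a i + ∑ j, b j) ∧ ∀ j, b j ≤ ∑ i, a i + ∑ j, b j := by
  have hA : 0 ≤ ∑ i, a i := Finset.sum_nonneg fun i _ => ha i
  have hB : 0 ≤ ∑ j, b j := Finset.sum_nonneg fun j _ => hb j
  exact ⟨fun i => by linarith [Finset.single_le_sum (fun i _ => ha i) (Finset.mem_univ i)],
    fun j => by linarith [Finset.single_le_sum (fun j _ => hb j) (Finset.mem_univ j)]⟩

theorem massG_nonneg (G : StarGraph) (u : GraphFun G) : 0 ≤ massG G u :=
  add_nonneg (Finset.sum_nonneg fun _ _ => integral_nonneg fun _ => sq_nonneg _)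
    (Finset.sum_nonneg fun _ _ => integral_nonneg fun _ => sq_nonneg _)

theorem InH1G.abs_le {p : ℝ} {G : StarGraph} {u : GraphFun G} (hu : InH1G p G u)
    (hm : 1 ≤ G.m) :
    (∀ i, ∀ x, 0 ≤ x → |u.f i x| ≤ 3 * √(√(massG G u) * √(kinG G u))) ∧
      ∀ j, ∀ x ∈ Icc 0 (G.ℓ j), |u.g j x| ≤ 3 * √(√(massG G u) * √(kinG G u)) := by
  obtain ⟨huf, hug, -, hfg, -⟩ := hu
  obtain ⟨hfm, hgm⟩ := single_le_sum_add_sum (a := fun i => ∫ x in Ioi 0, u.f i x ^ 2)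
    (b := fun j => ∫ x in Ioo 0 (G.ℓ j), u.g j x ^ 2)
    (fun _ => integral_nonneg fun _ => sq_nonneg _) (fun _ => integral_nonneg fun _ => sq_nonneg _)
  obtain ⟨hfk, hgk⟩ := single_le_sum_add_sum (a := fun i => ∫ x in Ioi 0, u.f' i x ^ 2)
    (b := fun j => ∫ x in Ioo 0 (G.ℓ j), u.g' j x ^ 2)
    (fun _ => integral_nonneg fun _ => sq_nonneg _) (fun _ => integral_nonneg fun _ => sq_nonneg _)
  have hf : ∀ L > 0, ∀ i, ∀ x, 0 ≤ x →
      |u.f i x| ≤ √(massG G u) / √L + √(kinG G u) * √L :=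
    fun L hL i x hx => (huf i).abs_le hL (hfm i) (hfk i) hx
  refine ⟨fun i x hx => le_three_mul_sqrt_mul_of_forall_le (by positivity) (by positivity)
      fun L hL => (hf L hL i x hx).trans ?_,
    fun j x hx => le_three_mul_sqrt_mul_of_forall_le (by positivity) (by positivity)
      fun L hL => (hug j).abs_le hL (hgm j) (hgk j) ?_ hx⟩
  · linarith [show 0 ≤ √(kinG G u) * √L by positivity]
  · rw [← hfg ⟨0, hm⟩ j]
    exact hf L hL _ 0 le_rfl

theorem setIntegral_abs_rpow_le {α : Type*} [MeasurableSpace α] {μ : Measure α} {s : Set α}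
    (hs : MeasurableSet s) {f : α → ℝ} {p B : ℝ} (hp : 2 ≤ p) (hfB : ∀ x ∈ s, |f x| ≤ B)
    (hf2 : IntegrableOn (fun x => f x ^ 2) s μ) :
    ∫ x in s, |f x| ^ p ∂μ ≤ B ^ (p - 2) * ∫ x in s, f x ^ 2 ∂μ := by
  rw [← integral_const_mul]
  refine integral_mono_of_nonneg (ae_of_all _ fun x => by positivity) (hf2.const_mul _)
    ((ae_restrict_mem hs).mono fun x hx => ?_)
  calc |f x| ^ p = |f x| ^ (p - 2) * f x ^ 2 := by
        rw [← sq_abs, ← Real.rpow_two, ← Real.rpow_add' (abs_nonneg _) (by linarith)]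
        norm_num
    _ ≤ B ^ (p - 2) * f x ^ 2 := by
        gcongr
        exact hfB x hx

theorem lpG_le_rpow_mul_massG {p B : ℝ} (hp : 2 ≤ p) {G : StarGraph} {u : GraphFun G}
    (hu : InH1G p G u) (hf : ∀ i, ∀ x ∈ Ioi 0, |u.f i x| ≤ B)
    (hg : ∀ j, ∀ x ∈ Ioo 0 (G.ℓ j), |u.g j x| ≤ B) :
    lpG p G u ≤ B ^ (p - 2) * massG G u := by
  rw [lpG, massG, mul_add, Finset.mul_sum, Finset.mul_sum]
  gcongr with i _ j _
  · exact setIntegral_abs_rpow_le measurableSet_Ioi hp (hf i) (hu.1 i).2.2.2.1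
  · exact setIntegral_abs_rpow_le measurableSet_Ioo hp (hg j) (hu.2.1 j).2.2.2.1

theorem gagliardo_nirenberg_on_graphs_general (p : ℝ) (hp₁ : 2 < p) :
    ∃ C : ℝ, 0 < C ∧
      ∀ G : StarGraph, 1 ≤ G.m → ∀ u : GraphFun G, InH1G p G u →
        lpG p G u ≤
          C * Real.sqrt (massG G u) ^ (p / 2 + 1) *
            Real.sqrt (kinG G u) ^ (p / 2 - 1) := by
  refine ⟨3 ^ (p - 2), by positivity, fun G hm u hu => ?_⟩
  obtain ⟨hf, hg⟩ := hu.abs_le hm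
  set M := √(massG G u)
  set K := √(kinG G u)
  have hM : 0 ≤ M := Real.sqrt_nonneg _
  have hK : 0 ≤ K := Real.sqrt_nonneg _
  calc lpG p G u ≤ (3 * √(M * K)) ^ (p - 2) * massG G u :=
        lpG_le_rpow_mul_massG hp₁.le hu (fun i x hx => hf i x hx.le)
          (fun j x hx => hg j x (Ioo_subset_Icc_self hx))
    _ = 3 ^ (p - 2) * (M ^ (p / 2 - 1) * M ^ (2 : ℝ)) * K ^ (p / 2 - 1) := by
        rw [Real.mul_rpow (by norm_num) (by positivity), Real.sqrt_eq_rpow, ← Real.rpow_mul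
          (by positivity), Real.mul_rpow hM hK, Real.rpow_two, Real.sq_sqrt (massG_nonneg G u)]
        ring_nf
    _ = 3 ^ (p - 2) * M ^ (p / 2 + 1) * K ^ (p / 2 - 1) := by
        rw [← Real.rpow_add' hM (by linarith)]
        ring_nf

/-- universal Gagliardo–Nirenberg inequality, Proposition 2.1:
there is `C_p > 0`, depending only on `p ∈ (2,6)`, such that for every star graph `G`
with at least one half-line and every `u ∈ H¹(G)`,
`‖u‖_{L^p(G)}^p ≤ C_p ‖u‖_{L²(G)}^{p/2+1} ‖u'‖_{L²(G)}^{p/2−1}`. -/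
theorem gagliardo_nirenberg_on_graphs (p : ℝ) (hp₁ : 2 < p) (hp₂ : p < 6) :
    ∃ C : ℝ, 0 < C ∧
      ∀ G : StarGraph, 1 ≤ G.m → ∀ u : GraphFun G, InH1G p G u →
        lpG p G u ≤
          C * Real.sqrt (massG G u) ^ (p / 2 + 1) *
            Real.sqrt (kinG G u) ^ (p / 2 - 1) :=
  gagliardo_nirenberg_on_graphs_general p hp₁
end
end

section
/- For every star graph G with at least one half-line (m ≥ 1) and every u ∈ H¹(G), the supremum norm satisfies ‖u‖_{L^∞(G)}² ≤ 2 ‖u‖_{L²(G)} ‖u′‖_{L²(G)}, where ‖u‖_{L^∞(G)} = max of the sup norms of the components of u. -/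
open MeasureTheory Filter Set

noncomputable section

/-!
On a half-line, `u²` is absolutely continuous with derivative `2 u u'` and, being integrable,
tends to `0` at infinity, so `u(x)² = -2 ∫_x^∞ u u'`. On a finite edge
`u(x)² = u(0)² + 2 ∫_0^x u u'`, and `u(0)` is also the value at the vertex of a half-line.
Hence `u(x)² ≤ 2 ∫_G |u u'|` everywhere on `G`, and Cauchy–Schwarz, first on each edge and then
over the edges, bounds `∫_G |u u'|` by `‖u‖_{L²(G)} ‖u'‖_{L²(G)}`.
-/

theorem integral_abs_mul_le_sqrt_mul_sqrt {α : Type*} [MeasurableSpace α] {μ : Measure α}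
    {u v : α → ℝ} (hu : MemLp u 2 μ) (hv : MemLp v 2 μ) :
    ∫ x, |u x * v x| ∂μ ≤ √(∫ x, u x ^ 2 ∂μ) * √(∫ x, v x ^ 2 ∂μ) := by
  have h2 : ENNReal.ofReal 2 = 2 := by norm_num
  have := integral_mul_norm_le_Lp_mul_Lq Real.HolderConjugate.two_two (h2 ▸ hu) (h2 ▸ hv)
  simpa [abs_mul, Real.sqrt_eq_rpow] using this

theorem sq_sub_sq_eq_two_intervalIntegral_mul {f f' : ℝ → ℝ} {a b : ℝ}
    (hf' : IntervalIntegrable f' volume a b)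
    (hf : ∀ x ∈ uIcc a b, f x = f a + ∫ t in a..x, f' t) :
    f b ^ 2 - f a ^ 2 = 2 * ∫ t in a..b, f t * f' t := by
  set F : ℝ → ℝ := fun x => f a + ∫ t in a..x, f' t
  have hF : AbsolutelyContinuousOnInterval F a b :=
    (LipschitzWith.const (f a)).lipschitzOnWith.absolutelyContinuousOnInterval.add
      (hf'.absolutelyContinuousOnInterval_intervalIntegral left_mem_uIcc)
  have hFf : ∀ x ∈ uIcc a b, F x = f x := fun x hx => (hf x hx).symm
  have hderiv : ∀ᵐ x, x ∈ uIoc a b → deriv (F * F) x = 2 * (f x * f' x) := by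
    filter_upwards [hf'.ae_hasDerivAt_integral] with x hx hxab
    have hxab := uIoc_subset_uIcc hxab
    have hFx : HasDerivAt F (f' x) x := (hx hxab a left_mem_uIcc).const_add (f a)
    rw [(hFx.mul hFx).deriv, hFf x hxab]
    ring
  rw [← intervalIntegral.integral_const_mul, ← intervalIntegral.integral_congr_ae hderiv,
    (hF.mul hF).integral_deriv_eq_sub, Pi.mul_apply, Pi.mul_apply, hFf a left_mem_uIcc,
    hFf b right_mem_uIcc]
  ring

theorem sq_eq_neg_two_integral_Ioi_mul {f f' : ℝ → ℝ} {a : ℝ}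
    (hf' : ∀ x, a ≤ x → IntervalIntegrable f' volume a x)
    (hf : ∀ x, a ≤ x → f x = f a + ∫ t in a..x, f' t)
    (hf_sq : IntegrableOn (fun x => f x ^ 2) (Ioi a))
    (hff' : IntegrableOn (fun x => f x * f' x) (Ioi a)) :
    f a ^ 2 = -(2 * ∫ t in Ioi a, f t * f' t) := by
  have hlim : Tendsto (fun x => f x ^ 2) atTop
      (nhds (f a ^ 2 + 2 * ∫ t in Ioi a, f t * f' t)) := by
    refine (((intervalIntegral_tendsto_integral_Ioi a hff' tendsto_id).const_mul 2).const_add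
      (f a ^ 2)).congr' ?_
    filter_upwards [eventually_ge_atTop a] with x hax
    have := sq_sub_sq_eq_two_intervalIntegral_mul (hf' x hax)
      fun y hy => hf y (by rw [uIcc_of_le hax] at hy; exact hy.1)
    simp only [id_eq]
    linarith
  have hzero := IntegrableAtFilter.eq_zero_of_tendsto ⟨Ioi a, Ioi_mem_atTop a, hf_sq⟩
    (fun s hs => by
      obtain ⟨b, hb⟩ := mem_atTop_sets.1 hs
      rw [← top_le_iff, ← Real.volume_Ici (a := b)]
      exact measure_mono fun x hx => hb x hx) hlim
  linarith

namespace H1HalfLine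

variable {p : ℝ} {f f' : ℝ → ℝ}

theorem memLp_two (h : H1HalfLine p f f') : MemLp f 2 (volume.restrict (Ioi 0)) :=
  (memLp_two_iff_integrable_sq
    ((h.1.mono Ioi_subset_Ici_self).aestronglyMeasurable measurableSet_Ioi)).2 h.2.2.2.1

theorem memLp_two_deriv (h : H1HalfLine p f f') : MemLp f' 2 (volume.restrict (Ioi 0)) := by
  have hmeas : AEStronglyMeasurable f' (volume.restrict (Ioi 0)) := by
    rw [← iUnion_Ioc_eq_Ioi_self_iff.2 fun x _ => exists_nat_ge x]
    exact aestronglyMeasurable_iUnion_iff.2 fun n =>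
      (h.2.1 0 n le_rfl n.cast_nonneg).1.aestronglyMeasurable
  exact (memLp_two_iff_integrable_sq hmeas).2 h.2.2.2.2.2

theorem sq_le_two_integral_abs_mul (h : H1HalfLine p f f') {x : ℝ} (hx : 0 ≤ x) :
    f x ^ 2 ≤ 2 * ∫ t in Ioi 0, |f t * f' t| := by
  have hff' : IntegrableOn (fun t => f t * f' t) (Ioi 0) :=
    h.memLp_two.integrable_mul h.memLp_two_deriv
  have heq := sq_eq_neg_two_integral_Ioi_mul (fun y hy => h.2.1 x y hx (hx.trans hy))
    (fun y hy => h.2.2.1 x y hx (hx.trans hy)) (h.2.2.2.1.mono_set (Ioi_subset_Ioi hx))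
    (hff'.mono_set (Ioi_subset_Ioi hx))
  calc f x ^ 2 ≤ 2 * |∫ t in Ioi x, f t * f' t| := by
        rw [heq]; linarith [neg_abs_le (∫ t in Ioi x, f t * f' t)]
    _ ≤ 2 * ∫ t in Ioi x, |f t * f' t| := by gcongr; exact abs_integral_le_integral_abs
    _ ≤ 2 * ∫ t in Ioi 0, |f t * f' t| := by
        gcongr 2 * ?_
        exact setIntegral_mono_set hff'.abs (ae_of_all _ fun _ => abs_nonneg _)
          (Ioi_subset_Ioi hx).eventuallyLE

end H1HalfLine

namespace H1Edge

variable {p ℓ : ℝ} {g g' : ℝ → ℝ}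

theorem memLp_two (h : H1Edge p ℓ g g') : MemLp g 2 (volume.restrict (Ioo 0 ℓ)) :=
  (memLp_two_iff_integrable_sq
    ((h.1.mono Ioo_subset_Icc_self).aestronglyMeasurable measurableSet_Ioo)).2 h.2.2.2.1

theorem memLp_two_deriv (h : H1Edge p ℓ g g') (hℓ : 0 ≤ ℓ) :
    MemLp g' 2 (volume.restrict (Ioo 0 ℓ)) :=
  (memLp_two_iff_integrable_sq ((h.2.1 0 ⟨le_rfl, hℓ⟩ ℓ ⟨hℓ, le_rfl⟩).1.mono_set
    Ioo_subset_Ioc_self).aestronglyMeasurable).2 h.2.2.2.2.2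

theorem sq_le_sq_zero_add_two_integral_abs_mul (h : H1Edge p ℓ g g') {x : ℝ}
    (hx : x ∈ Icc 0 ℓ) : g x ^ 2 ≤ g 0 ^ 2 + 2 * ∫ t in Ioo 0 ℓ, |g t * g' t| := by
  have hℓ : 0 ≤ ℓ := hx.1.trans hx.2
  have h0 : (0 : ℝ) ∈ Icc 0 ℓ := ⟨le_rfl, hℓ⟩
  have hgg' : IntervalIntegrable (fun t => g t * g' t) volume 0 ℓ := by
    rw [intervalIntegrable_iff_integrableOn_Ioo_of_le hℓ]
    exact h.memLp_two.integrable_mul (h.memLp_two_deriv hℓ)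
  have heq := sq_sub_sq_eq_two_intervalIntegral_mul (h.2.1 0 h0 x hx)
    fun y hy => h.2.2.1 0 h0 y (uIcc_subset_Icc h0 hx hy)
  calc g x ^ 2 = g 0 ^ 2 + 2 * ∫ t in 0..x, g t * g' t := by linarith
    _ ≤ g 0 ^ 2 + 2 * ∫ t in 0..x, |g t * g' t| := by
        gcongr
        exact (le_abs_self _).trans (intervalIntegral.abs_integral_le_integral_abs hx.1)
    _ ≤ g 0 ^ 2 + 2 * ∫ t in 0..ℓ, |g t * g' t| := by
        gcongr
        exact intervalIntegral.integral_mono_interval le_rfl hx.1 hx.2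
          (ae_of_all _ fun _ => abs_nonneg _) hgg'.abs
    _ = g 0 ^ 2 + 2 * ∫ t in Ioo 0 ℓ, |g t * g' t| := by
        rw [intervalIntegral.integral_of_le hℓ, integral_Ioc_eq_integral_Ioo]

end H1Edge

-- `∫_G |u u'|`
def crossG (G : StarGraph) (u : GraphFun G) : ℝ :=
  (∑ i, ∫ x in Ioi (0:ℝ), |u.f i x * u.f' i x|) +
    ∑ j, ∫ x in Ioo 0 (G.ℓ j), |u.g j x * u.g' j x|

section StarGraph

variable {p : ℝ} {G : StarGraph} {u : GraphFun G}

theorem crossG_le_sqrt_massG_mul_sqrt_kinG (hu : InH1G p G u) :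
    crossG G u ≤ √(massG G u) * √(kinG G u) := by
  obtain ⟨hf, hg, -⟩ := hu
  set A : Fin G.m ⊕ Fin G.k → ℝ := Sum.elim (fun i => ∫ x in Ioi 0, u.f i x ^ 2)
    fun j => ∫ x in Ioo 0 (G.ℓ j), u.g j x ^ 2
  set B : Fin G.m ⊕ Fin G.k → ℝ := Sum.elim (fun i => ∫ x in Ioi 0, u.f' i x ^ 2)
    fun j => ∫ x in Ioo 0 (G.ℓ j), u.g' j x ^ 2
  have hA : ∀ e, 0 ≤ A e := by rintro (i | j) <;> exact integral_nonneg fun _ => sq_nonneg _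
  have hB : ∀ e, 0 ≤ B e := by rintro (i | j) <;> exact integral_nonneg fun _ => sq_nonneg _
  calc crossG G u ≤ ∑ e, √(A e) * √(B e) := by
        simp only [crossG, Fintype.sum_sum_type, Sum.elim_inl, Sum.elim_inr, A, B]
        gcongr with i _ j _
        · exact integral_abs_mul_le_sqrt_mul_sqrt (hf i).memLp_two (hf i).memLp_two_deriv
        · exact integral_abs_mul_le_sqrt_mul_sqrt (hg j).memLp_two
            ((hg j).memLp_two_deriv (G.ℓ_pos j).le)
    _ ≤ √(∑ e, A e) * √(∑ e, B e) := Real.sum_sqrt_mul_sqrt_le _ hA hB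
    _ = √(massG G u) * √(kinG G u) := by rw [Fintype.sum_sum_type, Fintype.sum_sum_type]; rfl

theorem InH1G.sq_f_le_two_crossG (hu : InH1G p G u) (i : Fin G.m) {x : ℝ} (hx : 0 ≤ x) :
    u.f i x ^ 2 ≤ 2 * crossG G u := by
  have hf := (hu.1 i).sq_le_two_integral_abs_mul hx
  have hfi : ∫ x in Ioi 0, |u.f i x * u.f' i x| ≤ ∑ i, ∫ x in Ioi 0, |u.f i x * u.f' i x| :=
    Finset.single_le_sum (f := fun i => ∫ x in Ioi 0, |u.f i x * u.f' i x|)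
      (fun i _ => integral_nonneg fun _ => abs_nonneg _) (Finset.mem_univ i)
  have hg : 0 ≤ ∑ j, ∫ x in Ioo 0 (G.ℓ j), |u.g j x * u.g' j x| :=
    Finset.sum_nonneg fun j _ => integral_nonneg fun _ => abs_nonneg _
  unfold crossG
  linarith

theorem InH1G.sq_g_le_two_crossG (hu : InH1G p G u) (i : Fin G.m) (j : Fin G.k) {x : ℝ}
    (hx : x ∈ Icc 0 (G.ℓ j)) : u.g j x ^ 2 ≤ 2 * crossG G u := by
  have hg := (hu.2.1 j).sq_le_sq_zero_add_two_integral_abs_mul hx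
  have hvertex := (hu.1 i).sq_le_two_integral_abs_mul le_rfl
  rw [hu.2.2.2.1 i j] at hvertex
  have hfi : ∫ x in Ioi 0, |u.f i x * u.f' i x| ≤ ∑ i, ∫ x in Ioi 0, |u.f i x * u.f' i x| :=
    Finset.single_le_sum (f := fun i => ∫ x in Ioi 0, |u.f i x * u.f' i x|)
      (fun i _ => integral_nonneg fun _ => abs_nonneg _) (Finset.mem_univ i)
  have hgj : ∫ x in Ioo 0 (G.ℓ j), |u.g j x * u.g' j x|
      ≤ ∑ j, ∫ x in Ioo 0 (G.ℓ j), |u.g j x * u.g' j x| :=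
    Finset.single_le_sum (f := fun j => ∫ x in Ioo 0 (G.ℓ j), |u.g j x * u.g' j x|)
      (fun j _ => integral_nonneg fun _ => abs_nonneg _) (Finset.mem_univ j)
  unfold crossG
  linarith

theorem supNormG_sq_le {c : ℝ} (hc : 0 ≤ c) (hf : ∀ i, ∀ x ≥ 0, u.f i x ^ 2 ≤ c)
    (hg : ∀ j, ∀ x ∈ Icc 0 (G.ℓ j), u.g j x ^ 2 ≤ c) : supNormG G u ^ 2 ≤ c := by
  have hbound : ∀ y ∈ ({ y | ∃ i : Fin G.m, ∃ x ≥ (0:ℝ), y = |u.f i x| } ∪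
      { y | ∃ j : Fin G.k, ∃ x ∈ Icc 0 (G.ℓ j), y = |u.g j x| }), 0 ≤ y ∧ y ≤ √c := by
    rintro y (⟨i, x, hx, rfl⟩ | ⟨j, x, hx, rfl⟩)
    · exact ⟨abs_nonneg _, Real.abs_le_sqrt (hf i x hx)⟩
    · exact ⟨abs_nonneg _, Real.abs_le_sqrt (hg j x hx)⟩
  have h0 : 0 ≤ supNormG G u := Real.sSup_nonneg fun y hy => (hbound y hy).1
  have h1 : supNormG G u ≤ √c := Real.sSup_le (fun y hy => (hbound y hy).2) (Real.sqrt_nonneg c)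
  calc supNormG G u ^ 2 ≤ √c ^ 2 := by gcongr
    _ = c := Real.sq_sqrt hc

end StarGraph

theorem sup_norm_sq_le_on_graphs_general (p : ℝ)
    (G : StarGraph) (hm : 1 ≤ G.m) (u : GraphFun G) (hu : InH1G p G u) :
    supNormG G u ^ 2 ≤ 2 * Real.sqrt (massG G u) * Real.sqrt (kinG G u) := by
  have hcross := crossG_le_sqrt_massG_mul_sqrt_kinG hu
  refine supNormG_sq_le (by positivity) (fun i x hx => ?_) (fun j x hx => ?_)
  · linarith [hu.sq_f_le_two_crossG i hx]
  · linarith [hu.sq_g_le_two_crossG ⟨0, hm⟩ j hx]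

/-- universal `L^∞` bound, inequality (8): on every star graph `G`
with at least one half-line, `‖u‖_{L^∞(G)}² ≤ 2 ‖u‖_{L²(G)} ‖u'‖_{L²(G)}`. -/
theorem sup_norm_sq_le_on_graphs (p : ℝ) (hp₁ : 2 < p) (hp₂ : p < 6)
    (G : StarGraph) (hm : 1 ≤ G.m) (u : GraphFun G) (hu : InH1G p G u) :
    supNormG G u ^ 2 ≤ 2 * Real.sqrt (massG G u) * Real.sqrt (kinG G u) :=
  sup_norm_sq_le_on_graphs_general p G hm u hu
end
end

section
/- Let p ∈ (2,6) and β = (p−2)/(6−p). There exists a constant C_p > 0, depending only on p, with the following property: for every star graph G with at least one half-line (m ≥ 1), every μ > 0 and every u ∈ H¹_μ(G) with E(u,G) ≤ ½ E_G(μ), one has C_p^{-1} μ^{2β+1} ≤ ‖u′‖²_{L²(G)} ≤ C_p μ^{2β+1}, C_p^{-1} μ^{2β+1} ≤ ‖u‖^p_{L^p(G)} ≤ C_p μ^{2β+1}, and C_p^{-1} μ^{β+1} ≤ ‖u‖²_{L^∞(G)} ≤ C_p μ^{β+1}. -/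
open MeasureTheory Filter Set

noncomputable section

/-!
Two inequalities drive the estimates. The first is a Gagliardo–Nirenberg inequality on the star
graph, `‖u‖⁴_∞ ≤ 144 ‖u‖²₂ ‖u'‖²₂`: every point of a half-line or of a long edge lies in a window
of any prescribed length `L` on which `|u|` somewhere is at most `‖u‖₂ / √L` and `u` oscillates
by at most `√L ‖u'‖₂`, while a point of a short edge is joined to the vertex, which lies on a
half-line; optimising in `L` gives the bound. Together with `‖u‖ₚᵖ ≤ ‖u‖^(p-2)_∞ ‖u‖²₂` it shows that
`E_G(μ)` is finite. The second is `E_G(μ) ≤ -c μ^(2β+1)`, obtained from a fixed profile placed on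
one half-line and rescaled to mass `μ`.

If `E(u) ≤ ½ E_G(μ)`, the energy bound first forces `‖u‖ₚᵖ ≳ μ^(2β+1)`, hence
`‖u‖²_∞ ≳ μ^(β+1)`, hence `‖u'‖²₂ ≳ μ^(2β+1)`. Conversely `½ ‖u'‖²₂ ≤ ‖u‖ₚᵖ / p`, and the
Gagliardo–Nirenberg inequality bounds `‖u‖ₚᵖ` by `μ^((p+2)/4) ‖u'‖₂^((p-2)/2)`; since
`(p - 2) / 4 < 1` this caps `‖u'‖²₂`, and with it the other two quantities. All of this is
homogeneous in `μ`, so it is carried out for the quantities divided by their natural powers of `μ`.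
-/

open Real Topology

theorem sq_le_four_mul_of_forall_le_div_add_mul {x a b : ℝ} (hx : 0 ≤ x) (ha : 0 ≤ a)
    (hb : 0 ≤ b) (h : ∀ L > 0, x ≤ a / L + b * L) : x ^ 2 ≤ 4 * a * b := by
  rcases hx.eq_or_lt with rfl | hx
  · rw [zero_pow two_ne_zero]; positivity
  rcases ha.eq_or_lt with rfl | ha
  · have hL := h (x / (2 * b + 1)) (by positivity)
    rw [zero_div, zero_add, mul_div_assoc', le_div_iff₀ (by positivity)] at hL
    nlinarith
  · have hL := h (2 * a / x) (by positivity)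
    rw [show a / (2 * a / x) = x / 2 by field_simp] at hL
    have : x * x ≤ x * (x / 2 + b * (2 * a / x)) := mul_le_mul_of_nonneg_left hL hx.le
    field_simp at this
    nlinarith

theorem exists_mul_rpow_le_half_add {q : ℝ} (hq₀ : 0 ≤ q) (hq₁ : q < 1) (D : ℝ) :
    ∃ B, ∀ x, 0 ≤ x → D * x ^ q ≤ x / 2 + B := by
  set R := (2 * |D| + 1) ^ (1 - q)⁻¹
  have hR : 0 < R := by positivity
  have hRq : R ^ (1 - q) = 2 * |D| + 1 := rpow_inv_rpow (by positivity) (by linarith)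
  refine ⟨|D| * R ^ q, fun x hx => ?_⟩
  have hD : D * x ^ q ≤ |D| * x ^ q := by gcongr; exact le_abs_self D
  rcases le_total x R with hxR | hRx
  · have : |D| * x ^ q ≤ |D| * R ^ q := by gcongr
    linarith
  · have hx₀ : 0 < x := hR.trans_le hRx
    have h₁ : x ^ q ≤ x * R ^ (q - 1) := by
      calc x ^ q = x * x ^ (q - 1) := by rw [rpow_sub_one hx₀.ne']; field_simp
        _ ≤ x * R ^ (q - 1) :=
          mul_le_mul_of_nonneg_left (rpow_le_rpow_of_nonpos hR hRx (by linarith)) hx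
    have h₂ : |D| * R ^ (q - 1) ≤ 1 / 2 := by
      rw [show q - 1 = -(1 - q) by ring, rpow_neg hR.le, hRq, ← div_eq_mul_inv,
        div_le_iff₀ (by positivity)]
      linarith
    have : |D| * x ^ q ≤ x / 2 := by nlinarith [abs_nonneg D]
    nlinarith [abs_nonneg D, rpow_nonneg hR.le q]

theorem rpow_le_rpow_div_of_pow_le {a b r : ℝ} {n : ℕ} (ha : 0 ≤ a) (hr : 0 ≤ r) (hn : n ≠ 0)
    (h : a ^ n ≤ b) : a ^ r ≤ b ^ (r / n) := by
  calc a ^ r = (a ^ n) ^ (r / n) := by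
        rw [← rpow_natCast, ← rpow_mul ha]; field_simp
    _ ≤ b ^ (r / n) := by gcongr

theorem abs_rpow_le_rpow_sub_two_mul_sq {t M p : ℝ} (hp : 2 ≤ p) (ht : |t| ≤ M) :
    |t| ^ p ≤ M ^ (p - 2) * t ^ 2 := by
  rcases (abs_nonneg t).eq_or_lt with h | h
  · rw [← h, zero_rpow (by linarith)]
    exact mul_nonneg (rpow_nonneg ((abs_nonneg t).trans ht) _) (sq_nonneg t)
  · calc |t| ^ p = |t| ^ (p - 2) * |t| ^ 2 := by
          rw [← rpow_natCast, ← rpow_add h]; norm_num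
      _ ≤ M ^ (p - 2) * t ^ 2 := by rw [sq_abs]; gcongr

theorem bddAbove_and_csSup_pow_le {S : Set ℝ} {n : ℕ} {c : ℝ} (hn : n ≠ 0) (hS : S.Nonempty)
    (h₀ : ∀ y ∈ S, 0 ≤ y) (hc : ∀ y ∈ S, y ^ n ≤ c) :
    BddAbove S ∧ 0 ≤ sSup S ∧ sSup S ^ n ≤ c := by
  obtain ⟨y₀, hy₀⟩ := hS
  have hc₀ : 0 ≤ c := (pow_nonneg (h₀ y₀ hy₀) n).trans (hc y₀ hy₀)
  have hroot : (c ^ (n⁻¹ : ℝ)) ^ n = c := rpow_inv_natCast_pow hc₀ hn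
  have hle : ∀ y ∈ S, y ≤ c ^ (n⁻¹ : ℝ) := fun y hy =>
    (pow_le_pow_iff_left₀ (h₀ y hy) (by positivity) hn).mp (by rw [hroot]; exact hc y hy)
  have hbdd : BddAbove S := ⟨_, hle⟩
  have hsup₀ : 0 ≤ sSup S := (h₀ y₀ hy₀).trans (le_csSup hbdd hy₀)
  refine ⟨hbdd, hsup₀, ?_⟩
  calc sSup S ^ n ≤ (c ^ (n⁻¹ : ℝ)) ^ n := by gcongr; exact csSup_le ⟨y₀, hy₀⟩ hle
    _ = c := hroot

theorem exists_pos_mul_rpow_lt_mul_rpow {a c r s : ℝ} (hrs : r < s) (hc : 0 < c) :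
    ∃ x > 0, a * x ^ s < c * x ^ r := by
  have hsr : 0 < s - r := sub_pos.mpr hrs
  have h : Tendsto (fun x : ℝ => a * x ^ (s - r)) (𝓝[>] 0) (𝓝 0) := by
    have := ((continuous_rpow_const hsr.le).const_mul a).tendsto 0
    simpa [zero_rpow hsr.ne'] using this.mono_left nhdsWithin_le_nhds
  obtain ⟨x, hx, hx₀⟩ := ((h.eventually (gt_mem_nhds hc)).and self_mem_nhdsWithin).exists
  refine ⟨x, hx₀, ?_⟩
  have := mul_lt_mul_of_pos_right hx (rpow_pos_of_pos hx₀ r)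
  rwa [mul_assoc, ← rpow_add hx₀, sub_add_cancel] at this

theorem rpow_natCast_mul_add_one {μ : ℝ} (hμ : 0 < μ) (n : ℕ) (β : ℝ) :
    μ ^ (n * β + 1) = (μ ^ β) ^ n * μ := by
  rw [rpow_add_one hμ.ne', mul_comm (n : ℝ), rpow_mul hμ.le, rpow_natCast]

theorem exists_inv_le_and_le {l₁ l₂ l₃ : ℝ} (h₁ : 0 < l₁) (h₂ : 0 < l₂) (h₃ : 0 < l₃)
    (U₁ U₂ U₃ : ℝ) :
    ∃ C > 0, (C⁻¹ ≤ l₁ ∧ U₁ ≤ C) ∧ (C⁻¹ ≤ l₂ ∧ U₂ ≤ C) ∧ (C⁻¹ ≤ l₃ ∧ U₃ ≤ C) := by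
  set C := max (max U₁ (max U₂ U₃)) (max l₁⁻¹ (max l₂⁻¹ l₃⁻¹))
  have hl₁ : l₁⁻¹ ≤ C := by simp [C]
  have hl₂ : l₂⁻¹ ≤ C := by simp [C]
  have hl₃ : l₃⁻¹ ≤ C := by simp [C]
  exact ⟨C, (inv_pos.mpr h₁).trans_le hl₁, ⟨inv_le_of_inv_le₀ h₁ hl₁, by simp [C]⟩,
    ⟨inv_le_of_inv_le₀ h₂ hl₂, by simp [C]⟩, ⟨inv_le_of_inv_le₀ h₃ hl₃, by simp [C]⟩⟩

theorem sq_intervalIntegral_le {g : ℝ → ℝ} {x y : ℝ} (hxy : x ≤ y)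
    (hg : IntervalIntegrable g volume x y) (hg2 : IntegrableOn (fun t => g t ^ 2) (Ioo x y)) :
    (∫ t in x..y, g t) ^ 2 ≤ (y - x) * ∫ t in Ioo x y, g t ^ 2 := by
  rcases hxy.eq_or_lt with rfl | hlt
  · simp
  have hgi : IntegrableOn g (Ioo x y) := (intervalIntegrable_iff_integrableOn_Ioo_of_le hxy).mp hg
  set I := ∫ t in Ioo x y, |g t|
  set K := ∫ t in Ioo x y, g t ^ 2
  have habs : |∫ t in x..y, g t| ≤ I := by
    rw [intervalIntegral.integral_of_le hxy, integral_Ioc_eq_integral_Ioo]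
    exact abs_integral_le_integral_abs
  -- integrate `2 s |g| ≤ g ^ 2 + s ^ 2` and take `s = I / (y - x)`
  have hamgm : ∀ s : ℝ, 2 * s * I ≤ K + s ^ 2 * (y - x) := by
    intro s
    have hconst : IntegrableOn (fun _ => s ^ 2) (Ioo x y) := integrableOn_const (by simp)
    have h := setIntegral_mono_on (f := fun t => 2 * s * |g t|) (g := fun t => g t ^ 2 + s ^ 2)
      (hgi.abs.const_mul (2 * s)) (hg2.add hconst) measurableSet_Ioo
      fun t _ => by nlinarith [sq_nonneg (|g t| - s), sq_abs (g t)]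
    rwa [integral_const_mul, integral_add hg2 hconst, setIntegral_const, smul_eq_mul,
      Real.volume_real_Ioo_of_le hxy, mul_comm (y - x)] at h
  have hI := hamgm (I / (y - x))
  have hℓ : 0 < y - x := by linarith
  calc (∫ t in x..y, g t) ^ 2 ≤ I ^ 2 := by
        rw [← sq_abs]; exact pow_le_pow_left₀ (abs_nonneg _) habs 2
    _ ≤ (y - x) * K := by
        field_simp at hI
        nlinarith

theorem exists_sq_mul_le_setIntegral_sq {f : ℝ → ℝ} {a b : ℝ} (hab : a < b)
    (hf : ContinuousOn f (Icc a b)) (hf2 : IntegrableOn (fun x => f x ^ 2) (Ioo a b)) :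
    ∃ y ∈ Icc a b, f y ^ 2 * (b - a) ≤ ∫ x in Ioo a b, f x ^ 2 := by
  obtain ⟨y, hy, hmin⟩ := isCompact_Icc.exists_isMinOn (nonempty_Icc.mpr hab.le) (hf.pow 2)
  refine ⟨y, hy, ?_⟩
  have h := setIntegral_mono_on (integrableOn_const (C := f y ^ 2) (by simp)) hf2
    measurableSet_Ioo fun x hx => isMinOn_iff.mp hmin x (Ioo_subset_Icc_self hx)
  rwa [setIntegral_const, smul_eq_mul, Real.volume_real_Ioo_of_le hab.le, mul_comm] at h

def IsPrimitiveOn (I : Set ℝ) (f f' : ℝ → ℝ) : Prop :=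
  ContinuousOn f I ∧ (∀ x ∈ I, ∀ y ∈ I, IntervalIntegrable f' volume x y) ∧
    ∀ x ∈ I, ∀ y ∈ I, f y = f x + ∫ t in x..y, f' t

namespace IsPrimitiveOn

variable {I J s : Set ℝ} {f f' : ℝ → ℝ}

theorem mono (h : IsPrimitiveOn I f f') (hJ : J ⊆ I) : IsPrimitiveOn J f f' :=
  ⟨h.1.mono hJ, fun x hx y hy => h.2.1 x (hJ hx) y (hJ hy),
    fun x hx y hy => h.2.2 x (hJ hx) y (hJ hy)⟩

theorem sq_sub_le (h : IsPrimitiveOn I f f') {x y : ℝ} (hx : x ∈ I) (hy : y ∈ I) (hxy : x ≤ y)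
    (hs : Ioo x y ⊆ s) (hf'2 : IntegrableOn (fun t => f' t ^ 2) s) :
    (f y - f x) ^ 2 ≤ (y - x) * ∫ t in s, f' t ^ 2 := by
  rw [h.2.2 x hx y hy, add_sub_cancel_left]
  refine (sq_intervalIntegral_le hxy (h.2.1 x hx y hy) (hf'2.mono_set hs)).trans ?_
  exact mul_le_mul_of_nonneg_left
    (setIntegral_mono_set hf'2 (.of_forall fun t => sq_nonneg _) hs.eventuallyLE) (by linarith)

theorem sq_le {a L x₀ : ℝ} (h : IsPrimitiveOn (Icc a (a + L)) f f') (hL : 0 < L)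
    (hx₀ : x₀ ∈ Icc a (a + L)) (hs : Ioo a (a + L) ⊆ s)
    (hf2 : IntegrableOn (fun x => f x ^ 2) s) (hf'2 : IntegrableOn (fun x => f' x ^ 2) s) :
    f x₀ ^ 2 ≤ 2 * (∫ x in s, f x ^ 2) / L + 2 * L * ∫ x in s, f' x ^ 2 := by
  obtain ⟨y, hy, hfy⟩ :=
    exists_sq_mul_le_setIntegral_sq (by linarith) h.1 (hf2.mono_set hs)
  have hfy' : f y ^ 2 ≤ (∫ x in s, f x ^ 2) / L := by
    rw [add_sub_cancel_left] at hfy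
    rw [le_div_iff₀ hL]
    exact hfy.trans (setIntegral_mono_set hf2 (.of_forall fun t => sq_nonneg _) hs.eventuallyLE)
  have hosc : (f x₀ - f y) ^ 2 ≤ L * ∫ x in s, f' x ^ 2 := by
    have hK : 0 ≤ ∫ x in s, f' x ^ 2 := integral_nonneg fun _ => sq_nonneg _
    rcases le_total x₀ y with hxy | hxy
    · have := h.sq_sub_le hx₀ hy hxy ((Ioo_subset_Ioo hx₀.1 hy.2).trans hs) hf'2
      rw [← neg_sub, neg_sq]
      nlinarith [hx₀.1, hy.2]
    · have := h.sq_sub_le hy hx₀ hxy ((Ioo_subset_Ioo hy.1 hx₀.2).trans hs) hf'2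
      nlinarith [hx₀.2, hy.1]
  rw [mul_div_assoc]
  nlinarith [sq_nonneg (f x₀ - 2 * f y)]

end IsPrimitiveOn

section Components

variable {p ℓ L : ℝ} {f f' : ℝ → ℝ}

theorem H1HalfLine.isPrimitiveOn (hf : H1HalfLine p f f') : IsPrimitiveOn (Ici 0) f f' :=
  ⟨hf.1, fun x hx y hy => hf.2.1 x y hx hy, fun x hx y hy => hf.2.2.1 x y hx hy⟩

theorem H1Edge.isPrimitiveOn (hf : H1Edge p ℓ f f') : IsPrimitiveOn (Icc 0 ℓ) f f' :=
  ⟨hf.1, hf.2.1, hf.2.2.1⟩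

theorem H1HalfLine.sq_le (hf : H1HalfLine p f f') (hL : 0 < L) {x : ℝ} (hx : 0 ≤ x) :
    f x ^ 2 ≤ 2 * (∫ t in Ioi 0, f t ^ 2) / L + 2 * L * ∫ t in Ioi 0, f' t ^ 2 :=
  (hf.isPrimitiveOn.mono fun _ ht => hx.trans ht.1).sq_le hL ⟨le_rfl, by linarith⟩
    (fun _ ht => hx.trans_lt ht.1) hf.2.2.2.1 hf.2.2.2.2.2

/-- On an edge shorter than `L` there is no window of length `L`; the path to the vertex is used
instead. -/
theorem H1Edge.sq_le (hf : H1Edge p ℓ f f') (hL : 0 < L) {x : ℝ} (hx : x ∈ Icc 0 ℓ) :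
    f x ^ 2 ≤ 2 * f 0 ^ 2 +
      (2 * (∫ t in Ioo 0 ℓ, f t ^ 2) / L + 2 * L * ∫ t in Ioo 0 ℓ, f' t ^ 2) := by
  have hQ : 0 ≤ 2 * (∫ t in Ioo 0 ℓ, f t ^ 2) / L :=
    div_nonneg (mul_nonneg zero_le_two (integral_nonneg fun _ => sq_nonneg _)) hL.le
  have hK : 0 ≤ ∫ t in Ioo 0 ℓ, f' t ^ 2 := integral_nonneg fun _ => sq_nonneg _
  rcases le_or_gt ℓ L with hℓL | hLℓ
  · have h0 : (0 : ℝ) ∈ Icc 0 ℓ := ⟨le_rfl, hx.1.trans hx.2⟩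
    have := hf.isPrimitiveOn.sq_sub_le h0 hx hx.1 (Ioo_subset_Ioo le_rfl hx.2) hf.2.2.2.2.2
    nlinarith [sq_nonneg (f x - 2 * f 0), hx.2]
  · set a := min x (ℓ - L)
    have ha : 0 ≤ a := le_min hx.1 (by linarith)
    have haL : a + L ≤ ℓ := by linarith [min_le_right x (ℓ - L)]
    have hxa : x ∈ Icc a (a + L) := ⟨min_le_left _ _, by
      rcases le_total x (ℓ - L) with h | h
      · linarith [min_eq_left h]
      · linarith [min_eq_right h, hx.2]⟩
    have := (hf.isPrimitiveOn.mono (Icc_subset_Icc ha haL)).sq_le hL hxa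
      (Ioo_subset_Ioo ha haL) hf.2.2.2.1 hf.2.2.2.2.2
    nlinarith [sq_nonneg (f 0)]

end Components

theorem le_sum_add_sum_left {ι κ : Type*} [Fintype ι] [Fintype κ] {a : ι → ℝ} {b : κ → ℝ}
    (ha : ∀ i, 0 ≤ a i) (hb : ∀ j, 0 ≤ b j) (i : ι) : a i ≤ (∑ i, a i) + ∑ j, b j :=
  le_add_of_le_of_nonneg (Finset.single_le_sum (fun i _ => ha i) (Finset.mem_univ i))
    (Finset.sum_nonneg fun j _ => hb j)

theorem le_sum_add_sum_right {ι κ : Type*} [Fintype ι] [Fintype κ] {a : ι → ℝ} {b : κ → ℝ}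
    (ha : ∀ i, 0 ≤ a i) (hb : ∀ j, 0 ≤ b j) (j : κ) : b j ≤ (∑ i, a i) + ∑ j, b j :=
  le_add_of_nonneg_of_le (Finset.sum_nonneg fun i _ => ha i)
    (Finset.single_le_sum (fun j _ => hb j) (Finset.mem_univ j))

namespace GraphFun

variable {G : StarGraph} (u : GraphFun G)

theorem integral_f_sq_le_massG (i : Fin G.m) : ∫ x in Ioi 0, u.f i x ^ 2 ≤ massG G u :=
  le_sum_add_sum_left (fun _ => integral_nonneg fun _ => sq_nonneg _)
    (fun _ => integral_nonneg fun _ => sq_nonneg _) i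

theorem integral_g_sq_le_massG (j : Fin G.k) : ∫ x in Ioo 0 (G.ℓ j), u.g j x ^ 2 ≤ massG G u :=
  le_sum_add_sum_right (b := fun j => ∫ x in Ioo 0 (G.ℓ j), u.g j x ^ 2)
    (fun _ => integral_nonneg fun _ => sq_nonneg _)
    (fun _ => integral_nonneg fun _ => sq_nonneg _) j

theorem integral_f'_sq_le_kinG (i : Fin G.m) : ∫ x in Ioi 0, u.f' i x ^ 2 ≤ kinG G u :=
  le_sum_add_sum_left (fun _ => integral_nonneg fun _ => sq_nonneg _)
    (fun _ => integral_nonneg fun _ => sq_nonneg _) i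

theorem integral_g'_sq_le_kinG (j : Fin G.k) :
    ∫ x in Ioo 0 (G.ℓ j), u.g' j x ^ 2 ≤ kinG G u :=
  le_sum_add_sum_right (b := fun j => ∫ x in Ioo 0 (G.ℓ j), u.g' j x ^ 2)
    (fun _ => integral_nonneg fun _ => sq_nonneg _)
    (fun _ => integral_nonneg fun _ => sq_nonneg _) j

theorem massG_nonneg : 0 ≤ massG G u :=
  add_nonneg (Finset.sum_nonneg fun _ _ => integral_nonneg fun _ => sq_nonneg _)
    (Finset.sum_nonneg fun _ _ => integral_nonneg fun _ => sq_nonneg _)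

theorem kinG_nonneg : 0 ≤ kinG G u :=
  add_nonneg (Finset.sum_nonneg fun _ _ => integral_nonneg fun _ => sq_nonneg _)
    (Finset.sum_nonneg fun _ _ => integral_nonneg fun _ => sq_nonneg _)

/-- `supNormG G u` is by definition `sSup u.absValues`. -/
def absValues : Set ℝ :=
  {y | ∃ i : Fin G.m, ∃ x ≥ (0:ℝ), y = |u.f i x|} ∪
    {y | ∃ j : Fin G.k, ∃ x ∈ Icc 0 (G.ℓ j), y = |u.g j x|}

end GraphFun

namespace InH1G

variable {p : ℝ} {G : StarGraph} {u : GraphFun G}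

theorem sq_le_of_mem_absValues (hu : InH1G p G u) (hm : 1 ≤ G.m) {y L : ℝ}
    (hy : y ∈ u.absValues) (hL : 0 < L) : y ^ 2 ≤ 6 * (massG G u / L + L * kinG G u) := by
  have hhalf : ∀ i : Fin G.m, ∀ x ≥ (0:ℝ), u.f i x ^ 2 ≤ 2 * (massG G u / L + L * kinG G u) := by
    intro i x hx
    have hQ : (∫ t in Ioi 0, u.f i t ^ 2) / L ≤ massG G u / L :=
      div_le_div_of_nonneg_right (u.integral_f_sq_le_massG i) hL.le
    have hK := mul_le_mul_of_nonneg_left (u.integral_f'_sq_le_kinG i) hL.le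
    have := (hu.1 i).sq_le hL hx
    rw [mul_div_assoc] at this
    linarith
  have hbound : 0 ≤ massG G u / L + L * kinG G u :=
    add_nonneg (div_nonneg u.massG_nonneg hL.le) (mul_nonneg hL.le u.kinG_nonneg)
  rcases hy with ⟨i, x, hx, rfl⟩ | ⟨j, x, hx, rfl⟩
  · rw [sq_abs]; linarith [hhalf i x hx]
  · have hQ : (∫ t in Ioo 0 (G.ℓ j), u.g j t ^ 2) / L ≤ massG G u / L :=
      div_le_div_of_nonneg_right (u.integral_g_sq_le_massG j) hL.le
    have hK := mul_le_mul_of_nonneg_left (u.integral_g'_sq_le_kinG j) hL.le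
    have hvertex := hhalf ⟨0, hm⟩ 0 le_rfl
    rw [hu.2.2.2.1 ⟨0, hm⟩ j] at hvertex
    have := (hu.2.1 j).sq_le hL hx
    rw [mul_div_assoc, sq_abs] at *
    linarith

theorem pow_four_le_of_mem_absValues (hu : InH1G p G u) (hm : 1 ≤ G.m) {y : ℝ}
    (hy : y ∈ u.absValues) : y ^ 4 ≤ 144 * massG G u * kinG G u := by
  have h := sq_le_four_mul_of_forall_le_div_add_mul (x := y ^ 2 / 6) (by positivity)
    u.massG_nonneg u.kinG_nonneg fun L hL => by
      have := hu.sq_le_of_mem_absValues hm hy hL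
      linarith
  nlinarith

theorem supNormG_pow_four_le (hu : InH1G p G u) (hm : 1 ≤ G.m) :
    BddAbove u.absValues ∧ 0 ≤ supNormG G u ∧
      supNormG G u ^ 4 ≤ 144 * massG G u * kinG G u :=
  bddAbove_and_csSup_pow_le four_ne_zero ⟨_, Or.inl ⟨⟨0, hm⟩, 0, le_rfl, rfl⟩⟩
    (by rintro y (⟨i, x, -, rfl⟩ | ⟨j, x, -, rfl⟩) <;> exact abs_nonneg _)
    fun _ hy => hu.pow_four_le_of_mem_absValues hm hy

theorem lpG_le (hu : InH1G p G u) (hp : 2 ≤ p) (hbdd : BddAbove u.absValues) :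
    lpG p G u ≤ supNormG G u ^ (p - 2) * massG G u := by
  rw [lpG, massG, mul_add, Finset.mul_sum, Finset.mul_sum]
  refine add_le_add (Finset.sum_le_sum fun i _ => ?_) (Finset.sum_le_sum fun j _ => ?_)
  · rw [← integral_const_mul]
    refine setIntegral_mono_on (hu.1 i).2.2.2.2.1 ((hu.1 i).2.2.2.1.const_mul _)
      measurableSet_Ioi fun x hx => ?_
    exact abs_rpow_le_rpow_sub_two_mul_sq hp (le_csSup hbdd (Or.inl ⟨i, x, le_of_lt hx, rfl⟩))
  · rw [← integral_const_mul]
    refine setIntegral_mono_on (hu.2.1 j).2.2.2.2.1 ((hu.2.1 j).2.2.2.1.const_mul _)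
      measurableSet_Ioo fun x hx => ?_
    exact abs_rpow_le_rpow_sub_two_mul_sq hp
      (le_csSup hbdd (Or.inr ⟨j, x, ⟨le_of_lt hx.1, le_of_lt hx.2⟩, rfl⟩))

end InH1G

theorem energyG_bddBelow {p : ℝ} (hp₁ : 2 < p) (hp₂ : p < 6) {G : StarGraph} (hm : 1 ≤ G.m)
    (μ : ℝ) :
    BddBelow {e | ∃ u : GraphFun G, InH1G p G u ∧ massG G u = μ ∧ e = energyG p G u} := by
  set q := (p - 2) / 4
  obtain ⟨B, hB⟩ := exists_mul_rpow_le_half_add (q := q) (by positivity)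
    (by simp only [q]; linarith) ((144 * μ) ^ q * μ / p)
  refine ⟨-B, ?_⟩
  rintro _ ⟨u, hu, rfl, rfl⟩
  obtain ⟨hbdd, hM, hM4⟩ := hu.supNormG_pow_four_le hm
  have hμ := u.massG_nonneg
  have hK := u.kinG_nonneg
  have hMp : supNormG G u ^ (p - 2) ≤ (144 * massG G u) ^ q * kinG G u ^ q := by
    rw [← mul_rpow (by positivity) hK]
    exact_mod_cast rpow_le_rpow_div_of_pow_le hM (by linarith) four_ne_zero hM4
  have hlp := (hu.lpG_le hp₁.le hbdd).trans (mul_le_mul_of_nonneg_right hMp hμ)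
  have hlp' : 1 / p * lpG p G u ≤ (144 * massG G u) ^ q * massG G u / p * kinG G u ^ q := by
    calc 1 / p * lpG p G u ≤ 1 / p * ((144 * massG G u) ^ q * kinG G u ^ q * massG G u) := by
          gcongr
      _ = _ := by ring
  have := hB _ hK
  rw [energyG]
  linarith

def profile (x : ℝ) : ℝ := exp (-x) - exp (-(2 * x))

def profileDeriv (x : ℝ) : ℝ := 2 * exp (-(2 * x)) - exp (-x)

theorem hasDerivAt_profile (x : ℝ) : HasDerivAt profile (profileDeriv x) x := by
  have h₁ : HasDerivAt (fun y => exp (-y)) (-exp (-x)) x := by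
    simpa using (hasDerivAt_neg x).exp
  have h₂ : HasDerivAt (fun y => exp (-(2 * y))) (-(2 * exp (-(2 * x)))) x := by
    simpa [mul_comm] using ((hasDerivAt_id x).const_mul 2).neg.exp
  exact (h₁.sub h₂).congr_deriv (by simp only [profileDeriv]; ring)

theorem continuous_profileDeriv : Continuous profileDeriv := by
  unfold profileDeriv; fun_prop

theorem profile_pos {x : ℝ} (hx : 0 < x) : 0 < profile x :=
  sub_pos.mpr (exp_lt_exp.mpr (by linarith))

theorem profile_le_exp {x : ℝ} : profile x ≤ exp (-x) :=
  sub_le_self _ (exp_pos _).le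

theorem abs_profileDeriv_le {x : ℝ} (hx : 0 ≤ x) : |profileDeriv x| ≤ exp (-x) := by
  have : exp (-(2 * x)) ≤ exp (-x) := exp_le_exp.mpr (by linarith)
  rw [abs_le, profileDeriv]
  constructor <;> linarith [exp_pos (-(2 * x))]

theorem integrableOn_Ioi_of_abs_le_exp {f : ℝ → ℝ} {b : ℝ} (hb : 0 < b) (hf : Continuous f)
    (h : ∀ x > 0, |f x| ≤ exp (-b * x)) : IntegrableOn f (Ioi 0) :=
  (exp_neg_integrableOn_Ioi 0 hb).mono' hf.aestronglyMeasurable.restrict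
    ((ae_restrict_iff' measurableSet_Ioi).mpr (.of_forall fun x hx => h x hx))

theorem integrableOn_profile_sq : IntegrableOn (fun x => profile x ^ 2) (Ioi 0) :=
  integrableOn_Ioi_of_abs_le_exp two_pos (by unfold profile; fun_prop) fun x hx => by
    have : exp (-x) ^ 2 = exp (-2 * x) := by rw [← exp_nat_mul]; ring_nf
    rw [abs_sq, ← this]
    exact pow_le_pow_left₀ (profile_pos hx).le profile_le_exp 2

theorem integrableOn_profileDeriv_sq : IntegrableOn (fun x => profileDeriv x ^ 2) (Ioi 0) :=
  integrableOn_Ioi_of_abs_le_exp two_pos (continuous_profileDeriv.pow 2) fun x hx => by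
    have : exp (-x) ^ 2 = exp (-2 * x) := by rw [← exp_nat_mul]; ring_nf
    rw [abs_sq, ← this, ← sq_abs]
    exact pow_le_pow_left₀ (abs_nonneg _) (abs_profileDeriv_le hx.le) 2

theorem integrableOn_abs_profile_rpow {p : ℝ} (hp : 0 < p) :
    IntegrableOn (fun x => |profile x| ^ p) (Ioi 0) :=
  integrableOn_Ioi_of_abs_le_exp hp
    ((by unfold profile; fun_prop : Continuous profile).abs.rpow_const fun _ => Or.inr hp.le)
    fun x hx => by
      rw [abs_of_nonneg (by positivity), abs_of_pos (profile_pos hx),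
        show -p * x = -x * p by ring, exp_mul]
      exact rpow_le_rpow (profile_pos hx).le profile_le_exp hp.le

theorem setIntegral_Ioi_pos {g : ℝ → ℝ} (hg : IntegrableOn g (Ioi 0))
    (hpos : ∀ x > 0, 0 < g x) : 0 < ∫ x in Ioi 0, g x := by
  have hsupp : Function.support g ∩ Ioi 0 = Ioi 0 :=
    inter_eq_right.mpr fun x hx => (hpos x hx).ne'
  rw [setIntegral_pos_iff_support_of_nonneg_ae
    ((ae_restrict_iff' measurableSet_Ioi).mpr (.of_forall fun x hx => (hpos x hx).le)) hg, hsupp]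
  simp

theorem H1HalfLine.of_hasDerivAt {p : ℝ} {f f' : ℝ → ℝ} (hf : ∀ x, HasDerivAt f (f' x) x)
    (hf' : Continuous f') (h2 : IntegrableOn (fun x => f x ^ 2) (Ioi 0))
    (hp : IntegrableOn (fun x => |f x| ^ p) (Ioi 0))
    (h'2 : IntegrableOn (fun x => f' x ^ 2) (Ioi 0)) : H1HalfLine p f f' :=
  ⟨fun x _ => (hf x).continuousAt.continuousWithinAt,
    fun x y _ _ => hf'.intervalIntegrable x y,
    fun x y _ _ => by
      rw [intervalIntegral.integral_eq_sub_of_hasDerivAt (fun t _ => hf t)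
        (hf'.intervalIntegrable x y)]
      ring,
    h2, hp, h'2⟩

theorem MeasureTheory.IntegrableOn.comp_mul_Ioi {g : ℝ → ℝ} (hg : IntegrableOn g (Ioi 0)) {t : ℝ}
    (ht : 0 < t) : IntegrableOn (fun x => g (t * x)) (Ioi 0) :=
  (integrableOn_Ioi_comp_mul_left_iff g 0 ht).mpr (by rwa [mul_zero])

theorem setIntegral_Ioi_comp_mul (g : ℝ → ℝ) {t : ℝ} (ht : 0 < t) :
    ∫ x in Ioi 0, g (t * x) = t⁻¹ * ∫ x in Ioi 0, g x := by
  rw [integral_comp_mul_left_Ioi g 0 ht, mul_zero, smul_eq_mul]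

section ScaledProfile

variable {p A t : ℝ}

theorem H1HalfLine.scaled_profile (hp : 0 < p) (ht : 0 < t) :
    H1HalfLine p (fun x => A * profile (t * x)) (fun x => A * t * profileDeriv (t * x)) := by
  refine H1HalfLine.of_hasDerivAt (fun x => ?_) (by unfold profileDeriv; fun_prop) ?_ ?_ ?_
  · exact (((hasDerivAt_profile (t * x)).comp x ((hasDerivAt_id x).const_mul t)).const_mul
      A).congr_deriv (by ring)
  · simp only [mul_pow]
    exact (integrableOn_profile_sq.comp_mul_Ioi ht).const_mul (A ^ 2)
  · simp only [abs_mul, mul_rpow (abs_nonneg _) (abs_nonneg _)]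
    exact ((integrableOn_abs_profile_rpow hp).comp_mul_Ioi ht).const_mul (|A| ^ p)
  · simp only [mul_pow]
    exact (integrableOn_profileDeriv_sq.comp_mul_Ioi ht).const_mul (A ^ 2 * t ^ 2)

theorem integral_scaled_profile_sq (ht : 0 < t) :
    ∫ x in Ioi 0, (A * profile (t * x)) ^ 2 = A ^ 2 / t * ∫ x in Ioi 0, profile x ^ 2 := by
  simp only [mul_pow]
  rw [integral_const_mul, setIntegral_Ioi_comp_mul (fun y => profile y ^ 2) ht]
  ring

theorem energyHL_scaled_profile (hA : 0 ≤ A) (ht : 0 < t) :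
    energyHL p (fun x => A * profile (t * x)) (fun x => A * t * profileDeriv (t * x)) =
      1 / 2 * (A ^ 2 * t * ∫ x in Ioi 0, profileDeriv x ^ 2) -
        1 / p * (A ^ p / t * ∫ x in Ioi 0, |profile x| ^ p) := by
  simp only [energyHL, mul_pow, abs_mul, abs_of_nonneg hA,
    mul_rpow hA (abs_nonneg _)]
  rw [integral_const_mul, integral_const_mul,
    setIntegral_Ioi_comp_mul (fun y => profileDeriv y ^ 2) ht,
    setIntegral_Ioi_comp_mul (fun y => |profile y| ^ p) ht]
  field_simp

end ScaledProfile

namespace GraphFun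

variable {G : StarGraph} (i₀ : Fin G.m) (f f' : ℝ → ℝ)

def onHalfLine : GraphFun G where
  f i := if i = i₀ then f else 0
  f' i := if i = i₀ then f' else 0
  g _ := 0
  g' _ := 0

variable {i₀ f f'} {p : ℝ}

theorem inH1G_onHalfLine (hp : p ≠ 0) (hf : H1HalfLine p f f') (hf0 : f 0 = 0) :
    InH1G p G (onHalfLine i₀ f f') := by
  have hzero : H1HalfLine p 0 0 :=
    H1HalfLine.of_hasDerivAt (fun _ => hasDerivAt_const _ _) continuous_const (by simp)
      (by simp [zero_rpow hp]) (by simp)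
  refine ⟨fun i => ?_, fun j => ?_, fun i i' => ?_, fun i j => ?_, fun j j' => rfl⟩
  · by_cases h : i = i₀ <;> simp [onHalfLine, h, hf, hzero]
  · show H1Edge p (G.ℓ j) 0 0
    exact ⟨continuousOn_const, fun _ _ _ _ => intervalIntegrable_const, fun _ _ _ _ => by simp,
      by simp, by simp [zero_rpow hp], by simp⟩
  · by_cases h : i = i₀ <;> by_cases h' : i' = i₀ <;> simp [onHalfLine, h, h', hf0]
  · by_cases h : i = i₀ <;> simp [onHalfLine, h, hf0]

theorem massG_onHalfLine : massG G (onHalfLine i₀ f f') = ∫ x in Ioi 0, f x ^ 2 := by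
  rw [massG, Finset.sum_eq_single i₀ (fun i _ h => by simp [onHalfLine, h]) (by simp)]
  simp [onHalfLine]

theorem energyG_onHalfLine (hp : p ≠ 0) :
    energyG p G (onHalfLine i₀ f f') = energyHL p f f' := by
  rw [energyG, kinG, lpG, energyHL,
    Finset.sum_eq_single i₀ (fun i _ h => by simp [onHalfLine, h]) (by simp),
    Finset.sum_eq_single i₀ (fun i _ h => by simp [onHalfLine, h, zero_rpow hp]) (by simp)]
  simp [onHalfLine, zero_rpow hp]

end GraphFun

theorem levelG_le_energyHL {p : ℝ} (hp₁ : 2 < p) (hp₂ : p < 6) {G : StarGraph} (hm : 1 ≤ G.m)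
    {f f' : ℝ → ℝ} (hf : H1HalfLine p f f') (hf0 : f 0 = 0) :
    levelG p G (∫ x in Ioi 0, f x ^ 2) ≤ energyHL p f f' := by
  have hp : p ≠ 0 := by linarith
  rw [← GraphFun.energyG_onHalfLine (G := G) (i₀ := ⟨0, hm⟩) hp]
  exact csInf_le (energyG_bddBelow hp₁ hp₂ hm _)
    ⟨_, GraphFun.inH1G_onHalfLine hp hf hf0, GraphFun.massG_onHalfLine, rfl⟩

theorem exists_rescaling_energy_le {p Q K P : ℝ} (hp₁ : 2 < p) (hp₂ : p < 6) (hQ : 0 < Q)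
    (hP : 0 < P) :
    ∃ c > 0, ∀ μ > 0, ∃ A ≥ 0, ∃ t > 0, A ^ 2 / t * Q = μ ∧
      1 / 2 * (A ^ 2 * t * K) - 1 / p * (A ^ p / t * P) ≤
        -c * μ ^ (2 * ((p - 2) / (6 - p)) + 1) := by
  obtain ⟨α, hα, hneg⟩ := exists_pos_mul_rpow_lt_mul_rpow (a := Q * K / 2) (c := P / (p * Q))
    (by linarith : p - 2 < 4) (by positivity)
  refine ⟨P / (p * Q) * α ^ (p - 2) - Q * K / 2 * α ^ (4 : ℝ), by linarith, fun μ hμ => ?_⟩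
  set β := (p - 2) / (6 - p)
  -- `A = α μ^((β+1)/2)` and `t = α² Q μ^β` give mass `μ` and `μ^(2β+1)` times the energy
  -- obtained for `μ = 1`
  have hA2 : (α * μ ^ ((β + 1) / 2)) ^ 2 = α ^ 2 * (μ ^ β * μ) := by
    rw [mul_pow, ← rpow_natCast (μ ^ _), ← rpow_mul hμ.le, ← pow_one (μ ^ β),
      ← rpow_natCast_mul_add_one hμ 1]
    norm_num
  have hAp : (α * μ ^ ((β + 1) / 2)) ^ p = α ^ (p - 2) * α ^ 2 * ((μ ^ β) ^ 3 * μ) := by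
    have h6 : 6 - p ≠ 0 := by linarith
    have hexp : (β + 1) / 2 * p = (3 : ℕ) * β + 1 := by simp only [β]; field_simp; ring
    have hαp : α ^ p = α ^ (p - 2) * α ^ 2 := by
      rw [← rpow_natCast, ← rpow_add hα]; norm_num
    rw [mul_rpow hα.le (by positivity), ← rpow_mul hμ.le, hexp, rpow_natCast_mul_add_one hμ 3,
      hαp]
  refine ⟨α * μ ^ ((β + 1) / 2), by positivity, α ^ 2 * Q * μ ^ β, by positivity, ?_, ?_⟩
  · rw [hA2]
    field_simp
  · refine le_of_eq ?_
    rw [hA2, hAp, show 2 * β + 1 = (2 : ℕ) * β + 1 by norm_num, rpow_natCast_mul_add_one hμ 2,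
      show α ^ (4 : ℝ) = α ^ 4 by norm_num]
    field_simp
    ring

theorem levelG_le_scaled_profile {p : ℝ} (hp₁ : 2 < p) (hp₂ : p < 6) {G : StarGraph}
    (hm : 1 ≤ G.m) {A t : ℝ} (hA : 0 ≤ A) (ht : 0 < t) :
    levelG p G (A ^ 2 / t * ∫ x in Ioi 0, profile x ^ 2) ≤
      1 / 2 * (A ^ 2 * t * ∫ x in Ioi 0, profileDeriv x ^ 2) -
        1 / p * (A ^ p / t * ∫ x in Ioi 0, |profile x| ^ p) := by
  rw [← integral_scaled_profile_sq ht, ← energyHL_scaled_profile hA ht]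
  exact levelG_le_energyHL hp₁ hp₂ hm (H1HalfLine.scaled_profile (by linarith) ht)
    (by simp [profile])

theorem exists_levelG_le_neg_rpow {p : ℝ} (hp₁ : 2 < p) (hp₂ : p < 6) :
    ∃ c > 0, ∀ G : StarGraph, 1 ≤ G.m → ∀ μ > 0,
      levelG p G μ ≤ -c * μ ^ (2 * ((p - 2) / (6 - p)) + 1) := by
  obtain ⟨c, hc, hscaling⟩ := exists_rescaling_energy_le
    (K := ∫ x in Ioi 0, profileDeriv x ^ 2) hp₁ hp₂
    (setIntegral_Ioi_pos integrableOn_profile_sq fun x hx => pow_pos (profile_pos hx) 2)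
    (setIntegral_Ioi_pos (integrableOn_abs_profile_rpow (by linarith))
      fun x hx => rpow_pos_of_pos (abs_pos.mpr (profile_pos hx).ne') p)
  refine ⟨c, hc, fun G hm μ hμ => ?_⟩
  obtain ⟨A, hA, t, ht, hmass, henergy⟩ := hscaling μ hμ
  have hlevel := levelG_le_scaled_profile hp₁ hp₂ hm hA ht
  rw [hmass] at hlevel
  exact hlevel.trans henergy

theorem exists_bounds_of_normalized_energy_le {p c : ℝ} (hp₁ : 2 < p) (hp₂ : p < 6)
    (hc : 0 < c) :
    ∃ C > 0, ∀ k P m : ℝ, 0 ≤ k → 0 ≤ m → P ≤ m ^ ((p - 2) / 2) → m ^ 2 ≤ 144 * k →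
      1 / 2 * k - 1 / p * P ≤ -c →
      (C⁻¹ ≤ k ∧ k ≤ C) ∧ (C⁻¹ ≤ P ∧ P ≤ C) ∧ (C⁻¹ ≤ m ∧ m ≤ C) := by
  have hp : 0 < p := by linarith
  have hp2 : p - 2 ≠ 0 := by linarith
  set q := (p - 2) / 4
  obtain ⟨B, hB⟩ := exists_mul_rpow_le_half_add (q := q) (by positivity)
    (by simp only [q]; linarith) (2 / p * 144 ^ q)
  set m₀ := (p * c) ^ (2 / (p - 2))
  have hm₀ : 0 < m₀ := by positivity
  obtain ⟨C, hC, hCk, hCP, hCm⟩ := exists_inv_le_and_le (l₁ := m₀ ^ 2 / 144) (l₂ := p * c)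
    (by positivity) (by positivity) hm₀ (2 * B) ((288 * B) ^ q) √(288 * B)
  refine ⟨C, hC, fun k P m hk hm hPm hmk hE => ?_⟩
  have hPlow : p * c ≤ P := by
    have : c ≤ 1 / p * P := by linarith
    calc p * c ≤ p * (1 / p * P) := by gcongr
      _ = P := by field_simp
  have hmlow : m₀ ≤ m := by
    have h := rpow_le_rpow (by positivity) (hPlow.trans hPm) (by positivity : 0 ≤ 2 / (p - 2))
    rwa [← rpow_mul hm, show (p - 2) / 2 * (2 / (p - 2)) = 1 by field_simp, rpow_one] at h
  have hklow : m₀ ^ 2 / 144 ≤ k := by nlinarith [pow_le_pow_left₀ hm₀.le hmlow 2]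
  have hPk : P ≤ (144 * k) ^ q := by
    refine hPm.trans ?_
    have h := rpow_le_rpow_div_of_pow_le (r := (p - 2) / 2) hm (by linarith) two_ne_zero hmk
    rwa [show (p - 2) / 2 / ((2 : ℕ) : ℝ) = q by push_cast; ring] at h
  have hkup : k ≤ 2 * B := by
    have h : 1 / 2 * k ≤ 1 / p * (144 ^ q * k ^ q) := by
      rw [← mul_rpow (by norm_num) hk]
      have : 1 / p * P ≤ 1 / p * (144 * k) ^ q := by gcongr
      linarith
    have := hB k hk
    have : 2 / p * 144 ^ q * k ^ q = 2 * (1 / p * (144 ^ q * k ^ q)) := by ring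
    linarith
  have hPup : P ≤ (288 * B) ^ q :=
    hPk.trans (rpow_le_rpow (by positivity) (by linarith) (by positivity))
  have hmup : m ≤ √(288 * B) := by
    rw [← abs_of_nonneg hm]
    exact abs_le_sqrt (by linarith)
  exact ⟨⟨hCk.1.trans hklow, hkup.trans hCk.2⟩, ⟨hCP.1.trans hPlow, hPup.trans hCP.2⟩,
    ⟨hCm.1.trans hmlow, hmup.trans hCm.2⟩⟩

theorem exists_bounds_of_energy_le {p c : ℝ} (hp₁ : 2 < p) (hp₂ : p < 6) (hc : 0 < c) :
    ∃ C > 0, ∀ μ K P M : ℝ, 0 < μ → 0 ≤ K → 0 ≤ M → P ≤ M ^ (p - 2) * μ →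
      M ^ 4 ≤ 144 * μ * K → 1 / 2 * K - 1 / p * P ≤ -c * μ ^ (2 * ((p - 2) / (6 - p)) + 1) →
      (C⁻¹ * μ ^ (2 * ((p - 2) / (6 - p)) + 1) ≤ K ∧
        K ≤ C * μ ^ (2 * ((p - 2) / (6 - p)) + 1)) ∧
      (C⁻¹ * μ ^ (2 * ((p - 2) / (6 - p)) + 1) ≤ P ∧
        P ≤ C * μ ^ (2 * ((p - 2) / (6 - p)) + 1)) ∧
      (C⁻¹ * μ ^ ((p - 2) / (6 - p) + 1) ≤ M ^ 2 ∧ M ^ 2 ≤ C * μ ^ ((p - 2) / (6 - p) + 1)) := by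
  obtain ⟨C, hC, hbounds⟩ := exists_bounds_of_normalized_energy_le hp₁ hp₂ hc
  refine ⟨C, hC, fun μ K P M hμ hK hM hPM hM4 hE => ?_⟩
  set β := (p - 2) / (6 - p)
  set a := μ ^ β
  have ha : 0 < a := by positivity
  have hs : μ ^ (2 * β + 1) = a ^ 2 * μ := by
    rw [show 2 * β + 1 = (2 : ℕ) * β + 1 by norm_num, rpow_natCast_mul_add_one hμ 2]
  have hb : μ ^ (β + 1) = a * μ := rpow_add_one hμ.ne' β
  have hr : (a * μ) ^ ((p - 2) / 2) = a ^ 2 := by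
    have h6 : 6 - p ≠ 0 := by linarith
    have hexp : (β + 1) * ((p - 2) / 2) = β * 2 := by simp only [β]; field_simp; ring
    rw [← hb, ← rpow_mul hμ.le, hexp, rpow_mul hμ.le]
    norm_cast
  have hM2 : (M ^ 2) ^ ((p - 2) / 2) = M ^ (p - 2) := by
    rw [← rpow_natCast, ← rpow_mul hM]; ring_nf
  have hdiv : ∀ x y : ℝ, 0 < y → C⁻¹ ≤ x / y ∧ x / y ≤ C → C⁻¹ * y ≤ x ∧ x ≤ C * y :=
    fun x y hy h => ⟨(le_div_iff₀ hy).mp h.1, (div_le_iff₀ hy).mp h.2⟩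
  rw [hs] at hE
  rw [hs, hb]
  have hPn : P / (a ^ 2 * μ) ≤ (M ^ 2 / (a * μ)) ^ ((p - 2) / 2) := by
    rw [div_rpow (sq_nonneg M) (by positivity), hM2, hr,
      div_le_div_iff₀ (by positivity) (by positivity)]
    calc P * a ^ 2 ≤ M ^ (p - 2) * μ * a ^ 2 := by gcongr
      _ = M ^ (p - 2) * (a ^ 2 * μ) := by ring
  have hMn : (M ^ 2 / (a * μ)) ^ 2 ≤ 144 * (K / (a ^ 2 * μ)) := by
    rw [div_pow, div_le_iff₀ (by positivity),
      show 144 * (K / (a ^ 2 * μ)) * (a * μ) ^ 2 = 144 * μ * K by field_simp]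
    linarith
  have hEn : 1 / 2 * (K / (a ^ 2 * μ)) - 1 / p * (P / (a ^ 2 * μ)) ≤ -c := by
    rw [show 1 / 2 * (K / (a ^ 2 * μ)) - 1 / p * (P / (a ^ 2 * μ)) =
      (1 / 2 * K - 1 / p * P) / (a ^ 2 * μ) by ring, div_le_iff₀ (by positivity)]
    linarith
  obtain ⟨hk, hP, hm⟩ := hbounds _ _ _ (by positivity) (by positivity) hPn hMn hEn
  exact ⟨hdiv _ _ (by positivity) hk, hdiv _ _ (by positivity) hP, hdiv _ _ (by positivity) hm⟩

/-- Lemma 2.6, universal a priori estimates: there is `C_p > 0`,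
depending only on `p ∈ (2,6)`, such that for every star graph `G` with at least one
half-line, every `μ > 0` and every `u ∈ H¹_μ(G)` with `E(u,G) ≤ ½ E_G(μ)`, the
quantities `‖u'‖²_{L²}`, `‖u‖^p_{L^p}` and `‖u‖²_{L^∞}` are bounded above and below by
the corresponding powers of `μ`, with `β = (p−2)/(6−p)`. -/
theorem universal_a_priori_estimates (p : ℝ) (hp₁ : 2 < p) (hp₂ : p < 6) :
    ∃ C : ℝ, 0 < C ∧
      ∀ G : StarGraph, 1 ≤ G.m → ∀ μ : ℝ, 0 < μ →
        ∀ u : GraphFun G, InH1G p G u → massG G u = μ →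
          energyG p G u ≤ (1 / 2) * levelG p G μ →
          (C⁻¹ * μ ^ (2 * ((p - 2) / (6 - p)) + 1) ≤ kinG G u ∧
            kinG G u ≤ C * μ ^ (2 * ((p - 2) / (6 - p)) + 1)) ∧
          (C⁻¹ * μ ^ (2 * ((p - 2) / (6 - p)) + 1) ≤ lpG p G u ∧
            lpG p G u ≤ C * μ ^ (2 * ((p - 2) / (6 - p)) + 1)) ∧
          (C⁻¹ * μ ^ ((p - 2) / (6 - p) + 1) ≤ supNormG G u ^ 2 ∧
            supNormG G u ^ 2 ≤ C * μ ^ ((p - 2) / (6 - p) + 1)) := by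
  obtain ⟨c, hc, hlevel⟩ := exists_levelG_le_neg_rpow hp₁ hp₂
  obtain ⟨C, hC, hbounds⟩ := exists_bounds_of_energy_le hp₁ hp₂ (half_pos hc)
  refine ⟨C, hC, fun G hm μ hμ u hu hmass hE => ?_⟩
  obtain ⟨hbdd, hM, hM4⟩ := hu.supNormG_pow_four_le hm
  have hP := hu.lpG_le hp₁.le hbdd
  rw [hmass] at hM4 hP
  refine hbounds μ (kinG G u) (lpG p G u) (supNormG G u) hμ u.kinG_nonneg hM hP hM4 ?_
  calc energyG p G u ≤ 1 / 2 * levelG p G μ := hE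
    _ ≤ 1 / 2 * (-c * μ ^ (2 * ((p - 2) / (6 - p)) + 1)) := by gcongr; exact hlevel G hm μ hμ
    _ = -(c / 2) * μ ^ (2 * ((p - 2) / (6 - p)) + 1) := by ring
end
end
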